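/- Let λ₁λ₂ > 0, Q(u) = (λ₁u₁² + λ₂u₂²)/2, X(u) = (u₁,u₂,Q(u)), and let U₀ ⊂ ℝ² be a compact set. For a unit vector v ∈ ℝ³ define h_v(u) := n_Q(u)·v, where n_Q(u) = (−λ₁u₁, −λ₂u₂, 1)/√(1 + λ₁²u₁² + λ₂²u₂²). Then there exists c_Q > 0, depending only on λ₁, λ₂, and U₀, such that for every unit vector v ∈ ℝ³ and every u ∈ U₀ with h_v(u) = 0, the gradient satisfies |∇_u h_v(u)| ≥ c_Q. -/

import Mathlib

noncomputable section
open MeasureTheory Metric Set Function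
open scoped ENNReal RealInnerProductSpace

abbrev E3 : Type := EuclideanSpace ℝ (Fin 3)
abbrev E2 : Type := EuclideanSpace ℝ (Fin 2)

def mk3 (a b c : ℝ) : E3 := (WithLp.equiv 2 (Fin 3 → ℝ)).symm ![a, b, c]

/-- Unit normal of the quadratic graph at `X(u)`. -/
def nQ (l₁ l₂ : ℝ) (u : E2) : E3 :=
  (Real.sqrt (1 + l₁ ^ 2 * (u 0) ^ 2 + l₂ ^ 2 * (u 1) ^ 2))⁻¹ •
    mk3 (-(l₁ * u 0)) (-(l₂ * u 1)) 1

/-- The tangency function `h_v(u) = n_Q(u)·v`. -/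
def hFun (l₁ l₂ : ℝ) (v : E3) (u : E2) : ℝ := ⟪nQ l₁ l₂ u, v⟫

/-!
At a zero of `h_v` the numerator `(-∇Q(u), 1) · v` of `h_v` vanishes, so the derivative of the
normalising factor drops out and `∇h_v(u) = (-λ₁v₁, -λ₂v₂) / √(1 + |∇Q(u)|²)`. Tangency says
`v₃ = ∇Q(u) · (v₁, v₂)`, so Cauchy–Schwarz and `|v| = 1` give `(1 + |∇Q(u)|²)(v₁² + v₂²) ≥ 1`.
Hence `|∇h_v(u)| ≥ min(|λ₁|, |λ₂|) / (1 + |∇Q(u)|²)`, which is bounded below on the compact `U₀`.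
-/

def areaElemSq (l₁ l₂ : ℝ) (u : E2) : ℝ := 1 + l₁ ^ 2 * (u 0) ^ 2 + l₂ ^ 2 * (u 1) ^ 2

lemma one_le_areaElemSq (l₁ l₂ : ℝ) (u : E2) : 1 ≤ areaElemSq l₁ l₂ u := by
  simp only [areaElemSq, add_assoc, le_add_iff_nonneg_right]
  positivity

lemma differentiable_areaElemSq (l₁ l₂ : ℝ) : Differentiable ℝ (areaElemSq l₁ l₂) := by
  unfold areaElemSq
  fun_prop

def tangencyNum (l₁ l₂ : ℝ) (v : E3) (u : E2) : ℝ := v 2 - l₁ * u 0 * v 0 - l₂ * u 1 * v 1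

lemma hFun_eq_tangencyNum_mul (l₁ l₂ : ℝ) (v : E3) (u : E2) :
    hFun l₁ l₂ v u = tangencyNum l₁ l₂ v u * (√(areaElemSq l₁ l₂ u))⁻¹ := by
  simp [hFun, nQ, mk3, tangencyNum, areaElemSq, PiLp.inner_apply, Fin.sum_univ_three]
  ring

lemma hFun_eq_zero_iff (l₁ l₂ : ℝ) (v : E3) (u : E2) :
    hFun l₁ l₂ v u = 0 ↔ tangencyNum l₁ l₂ v u = 0 := by
  have : (√(areaElemSq l₁ l₂ u))⁻¹ ≠ 0 := by
    have := one_le_areaElemSq l₁ l₂ u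
    positivity
  rw [hFun_eq_tangencyNum_mul, mul_eq_zero, or_iff_left this]

lemma hasGradientAt_tangencyNum (l₁ l₂ : ℝ) (v : E3) (u : E2) :
    HasGradientAt (tangencyNum l₁ l₂ v) !₂[-(l₁ * v 0), -(l₂ * v 1)] u := by
  set g : E2 := !₂[-(l₁ * v 0), -(l₂ * v 1)]
  have affine : tangencyNum l₁ l₂ v = fun w => v 2 + InnerProductSpace.toDual ℝ E2 g w := by
    ext w
    simp [tangencyNum, g, PiLp.inner_apply, Fin.sum_univ_two]
    ring
  rw [hasGradientAt_iff_hasFDerivAt, affine]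
  exact (InnerProductSpace.toDual ℝ E2 g).hasFDerivAt.const_add (v 2)

theorem HasGradientAt.mul_of_eq_zero {F : Type*} [NormedAddCommGroup F] [InnerProductSpace ℝ F]
    [CompleteSpace F] {f k : F → ℝ} {f' : F} {x : F} (hf : HasGradientAt f f' x)
    (hk : DifferentiableAt ℝ k x) (hfx : f x = 0) :
    HasGradientAt (fun y => f y * k y) (k x • f') x := by
  rw [hasGradientAt_iff_hasFDerivAt] at hf ⊢
  have := hf.mul hk.hasFDerivAt
  rwa [hfx, zero_smul, zero_add, ← map_smul] at this

lemma gradient_hFun_of_eq_zero {l₁ l₂ : ℝ} {v : E3} {u : E2} (h : hFun l₁ l₂ v u = 0) :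
    gradient (hFun l₁ l₂ v) u =
      (√(areaElemSq l₁ l₂ u))⁻¹ • !₂[-(l₁ * v 0), -(l₂ * v 1)] := by
  have hS : 0 < areaElemSq l₁ l₂ u := zero_lt_one.trans_le (one_le_areaElemSq l₁ l₂ u)
  have hk : DifferentiableAt ℝ (fun w => (√(areaElemSq l₁ l₂ w))⁻¹) u :=
    ((differentiable_areaElemSq l₁ l₂ u).sqrt hS.ne').inv (Real.sqrt_ne_zero'.2 hS)
  have hfun : hFun l₁ l₂ v = fun w => tangencyNum l₁ l₂ v w * (√(areaElemSq l₁ l₂ w))⁻¹ :=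
    funext (hFun_eq_tangencyNum_mul l₁ l₂ v)
  rw [hfun]
  exact ((hasGradientAt_tangencyNum l₁ l₂ v u).mul_of_eq_zero hk
    ((hFun_eq_zero_iff l₁ l₂ v u).1 h)).gradient

lemma norm_gradient_hFun_sq_of_eq_zero {l₁ l₂ : ℝ} {v : E3} {u : E2} (h : hFun l₁ l₂ v u = 0) :
    ‖gradient (hFun l₁ l₂ v) u‖ ^ 2 =
      (l₁ ^ 2 * (v 0) ^ 2 + l₂ ^ 2 * (v 1) ^ 2) / areaElemSq l₁ l₂ u := by
  have hS : 0 ≤ areaElemSq l₁ l₂ u := zero_le_one.trans (one_le_areaElemSq l₁ l₂ u)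
  rw [gradient_hFun_of_eq_zero h, norm_smul, mul_pow, EuclideanSpace.real_norm_sq_eq,
    Fin.sum_univ_two, norm_inv, Real.norm_eq_abs, abs_of_nonneg (Real.sqrt_nonneg _), inv_pow,
    Real.sq_sqrt hS]
  simp only [Matrix.cons_val_zero, Matrix.cons_val_one, neg_sq, mul_pow]
  ring

lemma one_le_areaElemSq_mul_sq_add_sq {l₁ l₂ : ℝ} {v : E3} {u : E2} (hv : ‖v‖ = 1)
    (h : hFun l₁ l₂ v u = 0) :
    1 ≤ areaElemSq l₁ l₂ u * ((v 0) ^ 2 + (v 1) ^ 2) := by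
  have hunit : (v 0) ^ 2 + (v 1) ^ 2 + (v 2) ^ 2 = 1 := by
    simpa [EuclideanSpace.real_norm_sq_eq, Fin.sum_univ_three, hv] using
      (EuclideanSpace.real_norm_sq_eq v).symm
  have hv2 : v 2 = l₁ * u 0 * v 0 + l₂ * u 1 * v 1 := by
    have := (hFun_eq_zero_iff l₁ l₂ v u).1 h
    unfold tangencyNum at this
    linarith
  rw [hv2] at hunit
  unfold areaElemSq
  nlinarith [sq_nonneg (l₁ * u 0 * v 1 - l₂ * u 1 * v 0)]

lemma div_areaElemSq_le_norm_gradient_hFun {l₁ l₂ : ℝ} {v : E3} {u : E2} (hv : ‖v‖ = 1)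
    (h : hFun l₁ l₂ v u = 0) :
    min |l₁| |l₂| / areaElemSq l₁ l₂ u ≤ ‖gradient (hFun l₁ l₂ v) u‖ := by
  set S := areaElemSq l₁ l₂ u
  set m := min |l₁| |l₂|
  have hS : 1 ≤ S := one_le_areaElemSq l₁ l₂ u
  have hm₁ : m ^ 2 ≤ l₁ ^ 2 := by
    rw [← sq_abs l₁]; exact pow_le_pow_left₀ (by positivity) (min_le_left _ _) 2
  have hm₂ : m ^ 2 ≤ l₂ ^ 2 := by
    rw [← sq_abs l₂]; exact pow_le_pow_left₀ (by positivity) (min_le_right _ _) 2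
  have hcs := one_le_areaElemSq_mul_sq_add_sq hv h
  refine (pow_le_pow_iff_left₀ (by positivity) (norm_nonneg _) two_ne_zero).1 ?_
  rw [norm_gradient_hFun_sq_of_eq_zero h, div_pow, div_le_div_iff₀ (by positivity) (by positivity)]
  calc m ^ 2 * S = m ^ 2 * S * 1 := (mul_one _).symm
    _ ≤ m ^ 2 * S * (S * ((v 0) ^ 2 + (v 1) ^ 2)) := by gcongr
    _ = (m ^ 2 * (v 0) ^ 2 + m ^ 2 * (v 1) ^ 2) * S ^ 2 := by ring
    _ ≤ (l₁ ^ 2 * (v 0) ^ 2 + l₂ ^ 2 * (v 1) ^ 2) * S ^ 2 := by gcongr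

/-- uniform transversality of the tangency function on a compact chart. -/
theorem tangency_gradient_lower_bound (l₁ l₂ : ℝ) (hl : 0 < l₁ * l₂)
    (U₀ : Set E2) (hU₀ : IsCompact U₀) :
    ∃ cQ : ℝ, 0 < cQ ∧
      ∀ v : E3, ‖v‖ = 1 → ∀ u ∈ U₀, hFun l₁ l₂ v u = 0 →
        cQ ≤ ‖gradient (hFun l₁ l₂ v) u‖ := by
  obtain ⟨C, hC⟩ := hU₀.bddAbove_image (differentiable_areaElemSq l₁ l₂).continuous.continuousOn
  have hl₁ : l₁ ≠ 0 := left_ne_zero_of_mul hl.ne'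
  have hl₂ : l₂ ≠ 0 := right_ne_zero_of_mul hl.ne'
  refine ⟨min |l₁| |l₂| / max C 1, by positivity, fun v hv u hu h => ?_⟩
  have hSC : areaElemSq l₁ l₂ u ≤ max C 1 := le_max_of_le_left (hC (mem_image_of_mem _ hu))
  calc min |l₁| |l₂| / max C 1 ≤ min |l₁| |l₂| / areaElemSq l₁ l₂ u :=
        div_le_div_of_nonneg_left (by positivity)
          (zero_lt_one.trans_le (one_le_areaElemSq l₁ l₂ u)) hSC
    _ ≤ ‖gradient (hFun l₁ l₂ v) u‖ := div_areaElemSq_le_norm_gradient_hFun hv h
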